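/- arXiv:1004.1941 — 4 statements merged into one kernel-verified Lean document; each statement's English description precedes it below -/
import Mathlib

section
/- For any group G, any element z of the commutator subspace [ℓ¹(G), ℓ¹(G)] (the ℂ-span of elements ab − ba with a, b ∈ ℓ¹(G)), and any x ∈ G, the sum Σ_{g ∈ [x]} z_g of the coefficients of z over the conjugacy class of x equals 0. -/
/-- Convolution product on `ℓ¹(G)`-type functions. -/
noncomputable def l1conv {G : Type} [Group G] (a b : G → ℂ) : G → ℂ :=
  fun g => ∑' h : G, a h * b (h⁻¹ * g)

namespace L1Aux

variable {G : Type} [Group G]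

/-- The equivalence between `[x] × G` and pairs whose product is in `[x]`. -/
def pairEquiv (x : G) : {g : G // IsConj x g} × G ≃ {p : G × G // IsConj x (p.1 * p.2)} where
  toFun q := ⟨(q.2, q.2⁻¹ * q.1.val), by simpa [mul_inv_cancel_left] using q.1.2⟩
  invFun p := (⟨p.val.1 * p.val.2, p.2⟩, p.val.1)
  left_inv q := by ext <;> simp
  right_inv p := by ext <;> simp

/-- The swap equivalence. -/
def swapEquiv (x : G) : {p : G × G // IsConj x (p.1 * p.2)} ≃ {p : G × G // IsConj x (p.1 * p.2)} where
  toFun p := ⟨(p.val.2, p.val.1), p.2.trans (isConj_iff.mpr ⟨p.val.1⁻¹, by group⟩)⟩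
  invFun p := ⟨(p.val.2, p.val.1), p.2.trans (isConj_iff.mpr ⟨p.val.1⁻¹, by group⟩)⟩
  left_inv p := by ext <;> simp
  right_inv p := by ext <;> simp

theorem summable_conv (x : G) {a b : G → ℂ} (ha : Summable fun g => ‖a g‖)
    (hb : Summable fun g => ‖b g‖) :
    Summable (fun g : {g : G // IsConj x g} => l1conv a b g) := by
  have hF : Summable (fun p : G × G => a p.1 * b p.2) := (ha.mul_norm hb).of_norm
  have hT : Summable (fun p : {p : G × G // IsConj x (p.1 * p.2)} => a p.val.1 * b p.val.2) :=
    hF.subtype _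
  have hq : Summable (fun q : {g : G // IsConj x g} × G => a q.2 * b (q.2⁻¹ * q.1.val)) :=
    (pairEquiv x).summable_iff.mpr hT
  exact (hq.hasSum.prod_fiberwise fun g => (hq.prod_factor g).hasSum).summable

theorem tsum_conv (x : G) {a b : G → ℂ} (ha : Summable fun g => ‖a g‖)
    (hb : Summable fun g => ‖b g‖) :
    (∑' g : {g : G // IsConj x g}, l1conv a b g) =
      ∑' p : {p : G × G // IsConj x (p.1 * p.2)}, a p.val.1 * b p.val.2 := by
  have hF : Summable (fun p : G × G => a p.1 * b p.2) := (ha.mul_norm hb).of_norm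
  have hT : Summable (fun p : {p : G × G // IsConj x (p.1 * p.2)} => a p.val.1 * b p.val.2) :=
    hF.subtype _
  have hq : Summable (fun q : {g : G // IsConj x g} × G => a q.2 * b (q.2⁻¹ * q.1.val)) :=
    (pairEquiv x).summable_iff.mpr hT
  calc (∑' g : {g : G // IsConj x g}, l1conv a b g)
      = ∑' q : {g : G // IsConj x g} × G, a q.2 * b (q.2⁻¹ * q.1.val) :=
        (Summable.tsum_prod hq).symm
    _ = ∑' p : {p : G × G // IsConj x (p.1 * p.2)}, a p.val.1 * b p.val.2 :=
        (pairEquiv x).tsum_eq (fun p : {p : G × G // IsConj x (p.1 * p.2)} => a p.val.1 * b p.val.2)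

theorem tsum_conv_comm (x : G) {a b : G → ℂ} (ha : Summable fun g => ‖a g‖)
    (hb : Summable fun g => ‖b g‖) :
    (∑' g : {g : G // IsConj x g}, l1conv a b g) =
      ∑' g : {g : G // IsConj x g}, l1conv b a g := by
  rw [tsum_conv x ha hb, tsum_conv x hb ha]
  rw [← (swapEquiv x).tsum_eq (fun p : {p : G × G // IsConj x (p.1 * p.2)} => b p.val.1 * a p.val.2)]
  exact tsum_congr fun p => mul_comm _ _

end L1Aux

/-- Any element of the commutator subspace `[ℓ¹(G), ℓ¹(G)]` has
coefficient sum zero over each conjugacy class. -/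
theorem commutator_subspace_sum_over_conj_class_eq_zero
    (G : Type) [Group G] (x : G) (n : ℕ) (c : Fin n → ℂ)
    (a b : Fin n → G → ℂ)
    (ha : ∀ i, Summable fun g => ‖a i g‖)
    (hb : ∀ i, Summable fun g => ‖b i g‖)
    (z : G → ℂ)
    (hz : z = ∑ i : Fin n, c i • (l1conv (a i) (b i) - l1conv (b i) (a i))) :
    ∑' g : {g : G // IsConj x g}, z (g : G) = 0 := by
  subst hz
  have hsum : ∀ i : Fin n, Summable (fun g : {g : G // IsConj x g} =>
      (c i • (l1conv (a i) (b i) - l1conv (b i) (a i))) (g : G)) := by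
    intro i
    have := ((L1Aux.summable_conv x (ha i) (hb i)).sub
      (L1Aux.summable_conv x (hb i) (ha i))).const_smul (c i)
    simpa [Pi.smul_apply, Pi.sub_apply, smul_sub] using this
  have : (∑' g : {g : G // IsConj x g},
      ∑ i : Fin n, (c i • (l1conv (a i) (b i) - l1conv (b i) (a i))) (g : G)) =
      ∑ i : Fin n, ∑' g : {g : G // IsConj x g},
        (c i • (l1conv (a i) (b i) - l1conv (b i) (a i))) (g : G) :=
    Summable.tsum_finsetSum fun i _ => hsum i
  simp only [Finset.sum_apply] at this ⊢
  rw [this]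
  refine Finset.sum_eq_zero fun i _ => ?_
  simp only [Pi.smul_apply, Pi.sub_apply, smul_eq_mul]
  rw [tsum_mul_left]
  have := ((L1Aux.summable_conv x (ha i) (hb i)).sub (L1Aux.summable_conv x (hb i) (ha i)))
  rw [Summable.tsum_sub (L1Aux.summable_conv x (ha i) (hb i)) (L1Aux.summable_conv x (hb i) (ha i))]
  rw [L1Aux.tsum_conv_comm x (ha i) (hb i)]
  simp
end

section
/- In a binate group G, for every finitely generated subgroup H there is an injective homomorphism φ_H : H → G whose image commutes elementwise with H. -/
/-- In a binate group, for every finitely generated subgroup `H` there is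
an injective homomorphism `φ_H : H → G` whose image commutes elementwise with `H`. -/
theorem binate_phi_injective_and_image_commutes (G : Type) [Group G]
    (hbin : ∀ H : Subgroup G, H.FG →
      ∃ (φ : H →* G) (u : G), ∀ h : H, (h : G) = u * φ h * u⁻¹ * (φ h)⁻¹) :
    ∀ H : Subgroup G, H.FG →
      ∃ φ : H →* G, Function.Injective φ ∧ ∀ h k : H, Commute (φ h) (k : G) := by
  intro H hFG
  obtain ⟨φ, u, hu⟩ := hbin H hFG
  refine ⟨φ, ?_, ?_⟩
  · intro h k hφ
    have h1 := hu h
    have h2 := hu k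
    rw [hφ] at h1
    have : (h : G) = (k : G) := h1.trans h2.symm
    exact Subtype.ext this
  · intro h k
    have key : ∀ x : H, (x : G) * φ x = u * φ x * u⁻¹ := by
      intro x
      rw [hu x]; group
    have h1 := key h
    have h2 := key k
    have h3 := key (h * k)
    rw [map_mul, Subgroup.coe_mul] at h3
    have expand : (u * φ h * u⁻¹) * (u * φ k * u⁻¹) = u * (φ h * φ k) * u⁻¹ := by
      group
    have h4 : (h : G) * (k : G) * (φ h * φ k) = ((h : G) * φ h) * ((k : G) * φ k) := by
      rw [h1, h2, expand, h3]
    have h5 : (k : G) * (φ h * φ k) = φ h * ((k : G) * φ k) := by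
      have := h4
      rw [mul_assoc ((h:G)) ((k:G)) (φ h * φ k), mul_assoc] at this
      have := mul_left_cancel this
      rw [← mul_assoc] at this ⊢
      exact this
    have h6 : (k : G) * φ h = φ h * (k : G) := by
      have : ((k : G) * φ h) * φ k = (φ h * (k : G)) * φ k := by
        rw [mul_assoc, mul_assoc]; exact h5
      exact mul_right_cancel this
    exact h6.symm
end

section
/- Every binate group has no nontrivial finite quotients; in particular a nontrivial binate group admits no surjective homomorphism onto a nontrivial finite group. -/
/-- A binate group has no nontrivial finite quotients: any surjective
homomorphism onto a finite group has trivial target. -/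
theorem binate_no_nontrivial_finite_quotient (G : Type) [Group G]
    (hbin : ∀ H : Subgroup G, H.FG →
      ∃ (φ : H →* G) (u : G), ∀ h : H, (h : G) = u * φ h * u⁻¹ * (φ h)⁻¹) :
    ∀ (Q : Type) [Group Q] [Finite Q] (f : G →* Q),
      Function.Surjective f → ∀ q : Q, q = 1 := by
  intro Q _ _ f hf q
  obtain ⟨s, hs⟩ := hf.hasRightInverse
  set H : Subgroup G := Subgroup.closure (Set.range s) with hH
  have hfg : H.FG := by
    rw [Subgroup.fg_iff]
    exact ⟨Set.range s, rfl, Set.finite_range s⟩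
  obtain ⟨φ, u, hu⟩ := hbin H hfg
  set v : Q := f u with hv
  set c : Q → Q := fun x => v * x * v⁻¹ * x⁻¹ with hc
  -- c is surjective
  have hcsurj : Function.Surjective c := by
    intro x
    have hmem : s x ∈ H := Subgroup.subset_closure ⟨x, rfl⟩
    refine ⟨f (φ ⟨s x, hmem⟩), ?_⟩
    have h1 : (⟨s x, hmem⟩ : H) = (u * φ ⟨s x, hmem⟩ * u⁻¹ * (φ ⟨s x, hmem⟩)⁻¹ : G) :=
      hu ⟨s x, hmem⟩
    have h2 : f (s x) = c (f (φ ⟨s x, hmem⟩)) := by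
      have := congrArg f h1
      simpa [c, v, map_mul, map_inv] using this
    rw [← h2]
    exact hs x
  have hcinj : Function.Injective c := Finite.injective_iff_surjective.mpr hcsurj
  have hv1 : v = 1 := by
    have h1 : c v = c 1 := by
      simp [c]
    exact hcinj h1
  obtain ⟨x, hx⟩ := hcsurj q
  rw [← hx]
  simp [c, hv1]
end

section
/- In the Euclidean plane ℝ², for every δ > 0 and r > 0 there exists R > 0 such that for any four points x₁, x₂, y₁, y₂ with d(x₁,y₁) + d(x₂,y₂) ≤ r and d(x₁,y₂) + d(y₁,x₂) ≥ R, one has d(x₁,x₂) + d(y₁,y₂) ≤ d(x₁,y₂) + d(y₁,x₂) + δ. -/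
/-- The condition (b₁) holds in the Euclidean plane `ℝ²` for every
`δ > 0`. -/
theorem euclidean_plane_b1 :
    ∀ δ > (0 : ℝ), ∀ r > (0 : ℝ), ∃ R > (0 : ℝ),
      ∀ x₁ x₂ y₁ y₂ : EuclideanSpace ℝ (Fin 2),
        dist x₁ y₁ + dist x₂ y₂ ≤ r → R ≤ dist x₁ y₂ + dist y₁ x₂ →
          dist x₁ x₂ + dist y₁ y₂ ≤ dist x₁ y₂ + dist y₁ x₂ + δ := by
  intro δ hδ r hr
  refine ⟨(2 * r ^ 2 + 1) / δ, by positivity, ?_⟩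
  intro x₁ x₂ y₁ y₂ hsmall hbig
  set A := dist x₁ x₂ with hA
  set B := dist y₁ y₂ with hB
  set C := dist x₁ y₂ with hC
  set D := dist y₁ x₂ with hD
  set p := dist x₁ y₁ with hp
  set q := dist x₂ y₂ with hq
  have hpt : A * B ≤ p * q + D * C := by
    simpa [hA, hB, hC, hD, hp, hq] using
      EuclideanGeometry.mul_dist_le_mul_dist_add_mul_dist x₁ y₁ x₂ y₂
  have hA0 : 0 ≤ A := dist_nonneg
  have hB0 : 0 ≤ B := dist_nonneg
  have hC0 : 0 ≤ C := dist_nonneg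
  have hD0 : 0 ≤ D := dist_nonneg
  have hp0 : 0 ≤ p := dist_nonneg
  have hq0 : 0 ≤ q := dist_nonneg
  -- triangle inequalities
  have t1 : A ≤ C + q := by
    simpa [hA, hC, hq, dist_comm x₂ y₂] using dist_triangle x₁ y₂ x₂
  have t2 : C ≤ A + q := by
    simpa [hA, hC, hq] using dist_triangle x₁ x₂ y₂
  have t3 : B ≤ D + q := by
    simpa [hB, hD, hq] using dist_triangle y₁ x₂ y₂
  have t4 : D ≤ B + q := by
    simpa [hB, hD, hq, dist_comm x₂ y₂] using dist_triangle y₁ y₂ x₂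
  have t5 : A ≤ D + p := by
    have := dist_triangle x₁ y₁ x₂; simp only [← hA, ← hD, ← hp] at this; linarith
  have t6 : D ≤ A + p := by
    have := dist_triangle y₁ x₁ x₂; rw [dist_comm y₁ x₁] at this
    simp only [← hA, ← hD, ← hp] at this; linarith
  have t7 : B ≤ C + p := by
    have := dist_triangle y₁ x₁ y₂; rw [dist_comm y₁ x₁] at this
    simp only [← hB, ← hC, ← hp] at this; linarith
  have t8 : C ≤ B + p := by
    have := dist_triangle x₁ y₁ y₂; simp only [← hB, ← hC, ← hp] at this; linarith
  -- |(A-B)-(C-D)| ≤ 2q, |(A-B)+(C-D)| ≤ 2p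
  have key : ((A - B) - (C - D)) * ((A - B) + (C - D)) ≤ 4 * (p * q) := by
    nlinarith [mul_nonneg (sub_nonneg.2 t1) (sub_nonneg.2 t7),
      mul_nonneg (sub_nonneg.2 t2) (sub_nonneg.2 t8),
      mul_nonneg (sub_nonneg.2 t3) (sub_nonneg.2 t5),
      mul_nonneg (sub_nonneg.2 t4) (sub_nonneg.2 t6),
      mul_nonneg (sub_nonneg.2 t1) (sub_nonneg.2 t3),
      mul_nonneg (sub_nonneg.2 t2) (sub_nonneg.2 t4),
      mul_nonneg (sub_nonneg.2 t5) (sub_nonneg.2 t7),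
      mul_nonneg (sub_nonneg.2 t6) (sub_nonneg.2 t8)]
  have key2 : (A + B) ^ 2 ≤ (C + D) ^ 2 + 2 * r ^ 2 := by
    nlinarith [key, hpt, sq_nonneg (p - q), sq_nonneg (p + q - r)]
  have hCD : 2 * r ^ 2 + 1 ≤ δ * (C + D) := by
    have := (div_le_iff₀ hδ).mp hbig
    linarith [this]
  by_contra hcon
  push_neg at hcon
  have h1 : (C + D + δ) ^ 2 < (A + B) ^ 2 :=
    pow_lt_pow_left₀ hcon (by positivity) (by norm_num)
  have e : (C + D + δ) ^ 2 = (C + D) ^ 2 + 2 * (δ * (C + D)) + δ ^ 2 := by ring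
  linarith [sq_nonneg δ, sq_nonneg r]
end
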